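/- Let $a_1, a_2$ be real constants and let $x_1, x_2 : J \to \mathbb{R}$ be differentiable functions on an open interval $J$ satisfying the mCH $2$-peakon system. Then for any $t_0 \in J$ and all $t \in J$, $x_1(t) - x_2(t) = \tfrac{2}{3}(a_1^2 - a_2^2)(t - t_0) + x_1(t_0) - x_2(t_0)$. In particular, if $J = \mathbb{R}$ and $a_1^2 \neq a_2^2$, there is a unique time $t^* \in \mathbb{R}$ at which $x_1(t^*) = x_2(t^*)$ (the two peakons collide). -/

import Mathlib

/-!
The exponential interaction term is the same in both equations of motion, so it cancels in
`ẋ₁ - ẋ₂`: the separation has the constant derivative `(2/3)(a₁² - a₂²)` and is therefore affine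
on the interval `J`. On `J = ℝ` an affine function with nonzero slope has exactly one zero.
-/

theorem Set.OrdConnected.eq_add_smul_of_hasDerivAt {E : Type*} [NormedAddCommGroup E]
    [NormedSpace ℝ E] {f : ℝ → E} {c : E} {J : Set ℝ} (hJ : J.OrdConnected)
    (hf : ∀ t ∈ J, HasDerivAt f c t) {t₀ t : ℝ} (ht₀ : t₀ ∈ J) (ht : t ∈ J) :
    f t = f t₀ + (t - t₀) • c := by
  set g : ℝ → E := fun s => f s - s • c
  have hg : ∀ s ∈ J, HasDerivWithinAt g 0 J s := fun s hs => by
    simpa using ((hf s hs).fun_sub ((hasDerivAt_id s).smul_const c)).hasDerivWithinAt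
  have hgt : ‖g t - g t₀‖ ≤ 0 * ‖t - t₀‖ :=
    Convex.norm_image_sub_le_of_norm_hasDerivWithin_le hg (fun _ _ => by simp)
      hJ.convex ht₀ ht
  have hgeq : g t = g t₀ := sub_eq_zero.mp (norm_le_zero_iff.mp (by simpa using hgt))
  simp only [g, sub_eq_iff_eq_add] at hgeq
  rw [hgeq, sub_smul]
  abel

theorem existsUnique_eq_zero_of_eq_mul_sub_add {K : Type*} [Field K] {f : K → K} {c t₀ : K}
    (hc : c ≠ 0) (hf : ∀ t, f t = c * (t - t₀) + f t₀) : ∃! t, f t = 0 := by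
  refine ⟨t₀ - f t₀ / c, ?_, fun t (ht : f t = 0) => ?_⟩
  · show f _ = 0
    rw [hf]
    field_simp
    ring
  · rw [hf t] at ht
    field_simp
    linear_combination ht

theorem mCH_two_peakon_separation
    (a₁ a₂ : ℝ) (x₁ x₂ : ℝ → ℝ) (J : Set ℝ)
    (hJconn : J.OrdConnected)
    (heom₁ : ∀ t ∈ J, HasDerivAt x₁ ((2/3) * a₁ ^ 2
      + 2 * a₁ * a₂ * Real.exp (-|x₁ t - x₂ t|)) t)
    (heom₂ : ∀ t ∈ J, HasDerivAt x₂ ((2/3) * a₂ ^ 2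
      + 2 * a₁ * a₂ * Real.exp (-|x₁ t - x₂ t|)) t) :
    (∀ t₀ ∈ J, ∀ t ∈ J,
      x₁ t - x₂ t = (2/3) * (a₁ ^ 2 - a₂ ^ 2) * (t - t₀) + (x₁ t₀ - x₂ t₀))
    ∧ (J = Set.univ → a₁ ^ 2 ≠ a₂ ^ 2 → ∃! tstar : ℝ, x₁ tstar = x₂ tstar) := by
  have hsep : ∀ t ∈ J, HasDerivAt (fun s => x₁ s - x₂ s) ((2/3) * (a₁ ^ 2 - a₂ ^ 2)) t :=
    fun t ht => ((heom₁ t ht).fun_sub (heom₂ t ht)).congr_deriv (by ring)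
  have haffine : ∀ t₀ ∈ J, ∀ t ∈ J,
      x₁ t - x₂ t = (2/3) * (a₁ ^ 2 - a₂ ^ 2) * (t - t₀) + (x₁ t₀ - x₂ t₀) := by
    intro t₀ ht₀ t ht
    rw [hJconn.eq_add_smul_of_hasDerivAt hsep ht₀ ht, smul_eq_mul]
    ring
  refine ⟨haffine, fun hJ hne => ?_⟩
  subst hJ
  have hslope : (2/3) * (a₁ ^ 2 - a₂ ^ 2) ≠ 0 := mul_ne_zero (by norm_num) (sub_ne_zero.mpr hne)
  simpa only [sub_eq_zero] using existsUnique_eq_zero_of_eq_mul_sub_add hslope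
    (haffine 0 (Set.mem_univ 0) · (Set.mem_univ _))
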